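/- arXiv:2201.00313 — 5 statements merged into one kernel-verified Lean document; each statement's English description precedes it below -/
import Mathlib

section
/- For integers 1 ≤ m ≤ d, the inequality (d−1)(m+1)² ≥ 4·m·(d−m) holds, with equality if and only if m = 1 (for d ≥ 1). Consequently the binomial inequality (d−1)·(C(d,m) + d·C(d−1,m−1)) ≥ 4·m·C(d,m+1) holds; i.e., the Type-II secure determinant code parameters for ℓ = 1 satisfy the upper bound F_{s,II} ≤ (d−1)(α + dβ)/4, with equality at the MBR point m = 1. -/
/-! After clearing the denominator `m + 1`, the identities `d·C(d-1, m-1) = m·C(d, m)` and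
`(m+1)·C(d, m+1) = (d-m)·C(d, m)` turn the binomial inequality into the polynomial one
multiplied by `C(d, m)`. The polynomial inequality, with its equality case, comes from
`(d-1)(m+1)² - 4m(d-m) = (m-1)((m-1)d + 3m + 1)`. -/

namespace Nat

theorem sub_one_mul_add_one_sq_eq {d m : ℕ} (hm : 1 ≤ m) (hmd : m ≤ d) :
    (d - 1) * (m + 1) ^ 2 = 4 * m * (d - m) + (m - 1) * ((m - 1) * d + 3 * m + 1) := by
  zify [hm, hmd, hm.trans hmd]
  ring

theorem four_mul_mul_sub_le {d m : ℕ} (hm : 1 ≤ m) (hmd : m ≤ d) :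
    4 * m * (d - m) ≤ (d - 1) * (m + 1) ^ 2 :=
  sub_one_mul_add_one_sq_eq hm hmd ▸ Nat.le_add_right _ _

theorem sub_one_mul_add_one_sq_eq_iff {d m : ℕ} (hm : 1 ≤ m) (hmd : m ≤ d) :
    (d - 1) * (m + 1) ^ 2 = 4 * m * (d - m) ↔ m = 1 := by
  rw [sub_one_mul_add_one_sq_eq hm hmd, add_eq_left, Nat.mul_eq_zero]
  omega

theorem mul_choose_sub_one_sub_one (d : ℕ) {m : ℕ} (hm : 1 ≤ m) :
    d * choose (d - 1) (m - 1) = choose d m * m := by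
  obtain ⟨k, rfl⟩ : ∃ k, m = k + 1 := ⟨m - 1, by omega⟩
  cases d with
  | zero => simp
  | succ n => exact add_one_mul_choose_eq n k

theorem sub_one_mul_choose_add_mul_choose_sub_one_mul_succ (d : ℕ) {m : ℕ} (hm : 1 ≤ m) :
    (d - 1) * (choose d m + d * choose (d - 1) (m - 1)) * (m + 1)
      = (d - 1) * (m + 1) ^ 2 * choose d m := by
  rw [mul_choose_sub_one_sub_one d hm]
  ring

end Nat

/-- For `1 ≤ m ≤ d`: `(d−1)(m+1)² ≥ 4m(d−m)`, with equality iff `m = 1`;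
consequently `(d−1)·(C(d,m) + d·C(d−1,m−1)) ≥ 4·m·C(d,m+1)`, with equality at
the MBR point `m = 1`. -/
theorem typeII_tandon_bound_ell_one (d m : ℕ) (hm : 1 ≤ m) (hmd : m ≤ d) :
    ((d - 1) * (m + 1) ^ 2 ≥ 4 * m * (d - m)) ∧
    ((d - 1) * (m + 1) ^ 2 = 4 * m * (d - m) ↔ m = 1) ∧
    ((d - 1) * (Nat.choose d m + d * Nat.choose (d - 1) (m - 1))
        ≥ 4 * m * Nat.choose d (m + 1)) ∧
    (m = 1 → (d - 1) * (Nat.choose d m + d * Nat.choose (d - 1) (m - 1))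
        = 4 * m * Nat.choose d (m + 1)) := by
  have hα := Nat.sub_one_mul_choose_add_mul_choose_sub_one_mul_succ d hm
  have hF : 4 * m * Nat.choose d (m + 1) * (m + 1) = 4 * m * (d - m) * Nat.choose d m := by
    rw [mul_assoc, Nat.choose_succ_right_eq]
    ring
  refine ⟨Nat.four_mul_mul_sub_le hm hmd, Nat.sub_one_mul_add_one_sq_eq_iff hm hmd, ?_,
    fun h => ?_⟩
  · refine Nat.le_of_mul_le_mul_right ?_ m.succ_pos
    rw [hα, hF]
    exact Nat.mul_le_mul_right _ (Nat.four_mul_mul_sub_le hm hmd)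
  · refine Nat.eq_of_mul_eq_mul_right m.succ_pos ?_
    rw [hα, hF, (Nat.sub_one_mul_add_one_sq_eq_iff hm hmd).2 h]
end

section
/- For integers ℓ ≥ 0 and 1 ≤ m ≤ d−ℓ, the inequality (d−ℓ)²·C(d,m) ≥ d·m·C(d−ℓ+1, m+1) holds. (This shows that the Type-II secure determinant code parameters satisfy the upper bound F_{s,II} ≤ (d−ℓ)²·α/d for k = d.) -/
/-!
Put `e = d - ℓ`. Pascal's absorption identity `(m + 1) C(e+1, m+1) = (e + 1) C(e, m)` together with
`m (e + 1) ≤ (m + 1) e` (which is `m ≤ e`) gives `m C(e+1, m+1) ≤ e C(e, m)`. The remaining factor is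
controlled by the monotonicity of `C(n, m) / n = C(n-1, m-1) / m` in `n`: for `e ≤ d`,
`d C(e, m) ≤ e C(d, m)`. Multiplying the two bounds gives `d m C(e+1, m+1) ≤ e² C(d, m)`.
-/

namespace Nat

theorem mul_choose_sub_one_eq (n k : ℕ) : n * (n - 1).choose k = n.choose (k + 1) * (k + 1) := by
  cases n with
  | zero => simp
  | succ n => exact add_one_mul_choose_eq n k

theorem mul_choose_le_mul_choose_of_le {d e m : ℕ} (hm : 0 < m) (hed : e ≤ d) :
    d * e.choose m ≤ e * d.choose m := by
  obtain ⟨k, rfl⟩ : ∃ k, m = k + 1 := ⟨m - 1, by omega⟩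
  refine le_of_mul_le_mul_right ?_ (succ_pos k)
  calc d * e.choose (k + 1) * (k + 1)
      = d * (e * (e - 1).choose k) := by rw [mul_choose_sub_one_eq]; ring
    _ ≤ e * (d * (d - 1).choose k) := by
      rw [mul_left_comm]
      gcongr
    _ = e * d.choose (k + 1) * (k + 1) := by rw [mul_choose_sub_one_eq]; ring

theorem mul_choose_succ_succ_le {e m : ℕ} (hme : m ≤ e) :
    m * (e + 1).choose (m + 1) ≤ e * e.choose m := by
  refine le_of_mul_le_mul_right ?_ (succ_pos m)
  calc m * (e + 1).choose (m + 1) * (m + 1)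
      = m * (e + 1) * e.choose m := by rw [mul_assoc, ← add_one_mul_choose_eq]; ring
    _ ≤ (m + 1) * e * e.choose m := Nat.mul_le_mul_right _ (by nlinarith)
    _ = e * e.choose m * (m + 1) := by ring

end Nat

theorem typeII_upper_bound_satisfied_general (d m ℓ : ℕ) (hmd : m ≤ d - ℓ) :
    (d - ℓ) ^ 2 * Nat.choose d m ≥ d * (m * Nat.choose (d - ℓ + 1) (m + 1)) := by
  rcases Nat.eq_zero_or_pos m with rfl | hm
  · simp
  calc d * (m * (d - ℓ + 1).choose (m + 1))
      ≤ d * ((d - ℓ) * (d - ℓ).choose m) :=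
      Nat.mul_le_mul_left _ (Nat.mul_choose_succ_succ_le hmd)
    _ = (d - ℓ) * (d * (d - ℓ).choose m) := by ring
    _ ≤ (d - ℓ) * ((d - ℓ) * d.choose m) :=
      Nat.mul_le_mul_left _ (Nat.mul_choose_le_mul_choose_of_le hm (Nat.sub_le d ℓ))
    _ = (d - ℓ) ^ 2 * d.choose m := by ring

/-- For `ℓ ≥ 0` and `1 ≤ m ≤ d − ℓ`: `(d−ℓ)²·C(d,m) ≥ d·m·C(d−ℓ+1, m+1)`,
i.e. the Type-II secure determinant code parameters satisfy the upper bound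
`F_{s,II} ≤ (d−ℓ)²·α/d`. -/
theorem typeII_upper_bound_satisfied (d m ℓ : ℕ) (hm : 1 ≤ m) (hmd : m ≤ d - ℓ) :
    (d - ℓ) ^ 2 * Nat.choose d m ≥ d * (m * Nat.choose (d - ℓ + 1) (m + 1)) :=
  typeII_upper_bound_satisfied_general d m ℓ hmd
end

section
/- For integers ℓ ≥ 0, m ≥ 1, and d with m + 1 ≤ d − ℓ, the strict inequality C(d−1,m−1)·(m+1)·C(d−ℓ+1,m+2) < C(d−1,m)·m·C(d−ℓ+1,m+1) holds. Equivalently, the normalized repair bandwidth of the Type-II secure determinant codes is strictly increasing in the mode: β^(m)/F_{s,II}^(m) < β^(m+1)/F_{s,II}^(m+1); in particular the mode m = 1 point is always a Pareto point of the achievable trade-off. -/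
/-- For `ℓ ≥ 0`, `m ≥ 1`, `m + 1 ≤ d − ℓ`:
`C(d−1,m−1)·(m+1)·C(d−ℓ+1,m+2) < C(d−1,m)·m·C(d−ℓ+1,m+1)`, i.e. the normalized
repair bandwidth `β^(m)/F_{s,II}^(m)` of Type-II secure determinant codes is
strictly increasing in the mode `m`. -/
theorem typeII_normalized_beta_increasing (d m ℓ : ℕ) (hm : 1 ≤ m)
    (h : m + 1 ≤ d - ℓ) :
    Nat.choose (d - 1) (m - 1) * ((m + 1) * Nat.choose (d - ℓ + 1) (m + 2))
      < Nat.choose (d - 1) m * (m * Nat.choose (d - ℓ + 1) (m + 1)) := by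
  have hd : ℓ + m + 1 ≤ d := by omega
  have h1 : Nat.choose (d - 1) m * m
      = Nat.choose (d - 1) (m - 1) * (d - m) := by
    have := Nat.choose_succ_right_eq (d - 1) (m - 1)
    have hm1 : m - 1 + 1 = m := by omega
    have hm2 : d - 1 - (m - 1) = d - m := by omega
    rw [hm1, hm2] at this
    exact this
  have h2 : Nat.choose (d - ℓ + 1) (m + 2) * (m + 2)
      = Nat.choose (d - ℓ + 1) (m + 1) * (d - ℓ - m) := by
    have h2' := Nat.choose_succ_right_eq (d - ℓ + 1) (m + 1)
    rw [h2']
    congr 1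
    omega
  have hA : 0 < Nat.choose (d - 1) (m - 1) := Nat.choose_pos (by omega)
  have hC : 0 < Nat.choose (d - ℓ + 1) (m + 1) := Nat.choose_pos (by omega)
  set A := Nat.choose (d - 1) (m - 1) with hAdef
  set B := Nat.choose (d - 1) m with hBdef
  set C1 := Nat.choose (d - ℓ + 1) (m + 1) with hC1def
  set C2 := Nat.choose (d - ℓ + 1) (m + 2) with hC2def
  rw [← Nat.mul_lt_mul_right (show 0 < m + 2 by omega)]
  have key : A * ((m + 1) * C2) * (m + 2) = A * (m + 1) * (C1 * (d - ℓ - m)) := by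
    rw [← h2]; ring
  have key2 : B * (m * C1) * (m + 2) = A * (d - m) * (C1 * (m + 2)) := by
    have hBm : B * m = A * (d - m) := h1
    calc B * (m * C1) * (m + 2) = (B * m) * (C1 * (m + 2)) := by ring
      _ = A * (d - m) * (C1 * (m + 2)) := by rw [hBm]
  rw [key, key2]
  have hle : d - ℓ - m ≤ d - m := by omega
  have hdm : 1 ≤ d - m := by omega
  calc A * (m + 1) * (C1 * (d - ℓ - m)) ≤ A * (m + 1) * (C1 * (d - m)) :=
        Nat.mul_le_mul_left _ (Nat.mul_le_mul_left _ hle)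
    _ < A * (d - m) * (C1 * (m + 2)) := by
        have h3 : A * (m + 1) * (C1 * (d - m)) = (A * C1 * (d - m)) * (m + 1) := by ring
        have h4 : A * (d - m) * (C1 * (m + 2)) = (A * C1 * (d - m)) * (m + 2) := by ring
        rw [h3, h4]
        exact (Nat.mul_lt_mul_left (Nat.mul_pos (Nat.mul_pos hA hC) hdm)).mpr (by omega)
end

section
/- For integers ℓ ≥ 1, m ≥ 1, and d with m + 1 ≤ d − ℓ, the strict inequality (m+1)·C(d,m)·C(d−ℓ+1,m+2) > m·C(d,m+1)·C(d−ℓ+1,m+1) holds if and only if ℓ·(m+1)² < d − m. Equivalently, the normalized per-node storage of the Type-II secure determinant codes satisfies α^(m)/F_{s,II}^(m) > α^(m+1)/F_{s,II}^(m+1) if and only if ℓ < (d+1−(m+1))/(m+1)². -/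
/-! Pascal's ratio rule `C(n, k+1)·(k+1) = C(n, k)·(n-k)`, applied to both products, cancels
the positive factor `C(d,m)·C(d-ℓ+1,m+1)` and leaves the linear comparison
`m(m+2)(d-m) < (m+1)²(d-ℓ-m)`. Since `(m+1)² = m(m+2) + 1` and `d-m = (d-ℓ-m) + ℓ`,
both sides of the claimed equivalence reduce to `m(m+2)·ℓ < d-ℓ-m`. -/

theorem Nat.mul_choose_succ_mul_choose_lt_iff {d n m : ℕ} (hmd : m ≤ d) (hmn : m + 1 ≤ n) :
    m * d.choose (m + 1) * n.choose (m + 1) < (m + 1) * d.choose m * n.choose (m + 2) ↔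
      m * (m + 2) * (d - m) < (m + 1) ^ 2 * (n - (m + 1)) := by
  have hpos : 0 < d.choose m * n.choose (m + 1) :=
    Nat.mul_pos (Nat.choose_pos hmd) (Nat.choose_pos hmn)
  have hd := Nat.choose_succ_right_eq d m
  have hn := Nat.choose_succ_right_eq n (m + 1)
  have lhs : m * d.choose (m + 1) * n.choose (m + 1) * ((m + 1) * (m + 2))
      = m * (m + 2) * (d - m) * (d.choose m * n.choose (m + 1)) := by
    calc m * d.choose (m + 1) * n.choose (m + 1) * ((m + 1) * (m + 2))
        = m * (m + 2) * (d.choose (m + 1) * (m + 1)) * n.choose (m + 1) := by ring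
      _ = m * (m + 2) * (d - m) * (d.choose m * n.choose (m + 1)) := by rw [hd]; ring
  have rhs : (m + 1) * d.choose m * n.choose (m + 2) * ((m + 1) * (m + 2))
      = (m + 1) ^ 2 * (n - (m + 1)) * (d.choose m * n.choose (m + 1)) := by
    calc (m + 1) * d.choose m * n.choose (m + 2) * ((m + 1) * (m + 2))
        = (m + 1) ^ 2 * d.choose m * (n.choose (m + 1 + 1) * (m + 1 + 1)) := by ring
      _ = (m + 1) ^ 2 * (n - (m + 1)) * (d.choose m * n.choose (m + 1)) := by rw [hn]; ring
  rw [← mul_lt_mul_iff_of_pos_right (show 0 < (m + 1) * (m + 2) by positivity), lhs, rhs]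
  exact mul_lt_mul_iff_of_pos_right hpos

theorem Nat.mul_add_lt_succ_mul_iff (k z ℓ : ℕ) :
    k * (z + ℓ) < (k + 1) * z ↔ ℓ * (k + 1) < z + ℓ := by
  constructor <;> intro h <;> linarith

theorem typeII_normalized_alpha_decreasing_iff_general (d m ℓ : ℕ) (h : m + 1 ≤ d - ℓ) :
    ((m + 1) * Nat.choose d m * Nat.choose (d - ℓ + 1) (m + 2)
        > m * Nat.choose d (m + 1) * Nat.choose (d - ℓ + 1) (m + 1))
      ↔ ℓ * (m + 1) ^ 2 < d - m := by
  rw [gt_iff_lt, Nat.mul_choose_succ_mul_choose_lt_iff (by omega) (by omega),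
    show d - ℓ + 1 - (m + 1) = d - ℓ - m by omega, show d - m = d - ℓ - m + ℓ by omega,
    show (m + 1) ^ 2 = m * (m + 2) + 1 by ring]
  exact Nat.mul_add_lt_succ_mul_iff _ _ _

/-- For `ℓ ≥ 1`, `m ≥ 1`, `m + 1 ≤ d − ℓ`:
`(m+1)·C(d,m)·C(d−ℓ+1,m+2) > m·C(d,m+1)·C(d−ℓ+1,m+1)` holds iff
`ℓ·(m+1)² < d − m`, i.e. the normalized per-node storage of Type-II secure
determinant codes satisfies `ᾱ^(m) > ᾱ^(m+1)` iff `ℓ < (d+1−(m+1))/(m+1)²`. -/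
theorem typeII_normalized_alpha_decreasing_iff (d m ℓ : ℕ) (hℓ : 1 ≤ ℓ)
    (hm : 1 ≤ m) (h : m + 1 ≤ d - ℓ) :
    ((m + 1) * Nat.choose d m * Nat.choose (d - ℓ + 1) (m + 2)
        > m * Nat.choose d (m + 1) * Nat.choose (d - ℓ + 1) (m + 1))
      ↔ ℓ * (m + 1) ^ 2 < d - m :=
  typeII_normalized_alpha_decreasing_iff_general d m ℓ h
end

section
/- (Full-rankness of the eavesdropped repair encoder matrix.) Let F be a field, let 1 ≤ m ≤ d and 1 ≤ ℓ ≤ d be integers, and let ψ₁, …, ψ_ℓ be distinct nonzero elements of F. For f ∈ F, let Ξ^f be the matrix whose rows are indexed by the m-element subsets I of [d] and whose columns are indexed by the (m−1)-element subsets 𝒥 of [d], with entry Ξ^f(I,𝒥) = (−1)^{ind_I(x)} · f^x if 𝒥 ∪ {x} = I for some x ∈ I \ 𝒥, and Ξ^f(I,𝒥) = 0 otherwise, where ind_I(x) = |{y ∈ I : y ≤ x}|. Let ⌈Ξ⌉^ℒ be the matrix whose rows are indexed by the m-element subsets I of [d] with I ∩ [ℓ] ≠ ∅ and whose columns are indexed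 by pairs (j, 𝒥) with j ∈ [ℓ] and 𝒥 an (m−1)-subset of [d], with entry ⌈Ξ⌉^ℒ(I,(j,𝒥)) = Ξ^{ψ_j}(I,𝒥). Then ⌈Ξ⌉^ℒ has full row rank; i.e., its rank equals C(d,m) − C(d−ℓ,m). -/
/-!
Let `g` be a combination of the rows with `∑_I g_I Ξ(I, (j, J)) = 0` for every column. We show
`g_A = 0` by induction on `|A ∩ [ℓ]|`. Pick `x ∈ A ∩ [ℓ]` and put `J = A ∖ {x}`. The rows meeting
`J` in `m - 1` points are the `J ∪ {y}`, `y ∉ J`, so the columns `(j, J)` read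
`∑_{y ∉ J} ±g_{J ∪ {y}} ψ_j^y = 0`. For `y > ℓ` the set `J ∪ {y}` meets `[ℓ]` in fewer points than
`A`, so those terms vanish by induction, and what is left is a Vandermonde system in the exponents
`y ∈ [ℓ]` at the `ℓ` distinct nonzero nodes `ψ_j`, whose only solution is zero.
-/

open Finset

section Vandermonde

variable {R : Type*} [CommRing R] [IsDomain R]

theorem eq_zero_of_forall_sum_mul_pow_eq_zero {n : ℕ} {v : Fin n → R}
    (hv : Function.Injective v) {s : Finset ℕ} (hs : s ⊆ range n) {a : ℕ → R}
    (h : ∀ j, ∑ y ∈ s, a y * v j ^ y = 0) : ∀ y ∈ s, a y = 0 := by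
  have hb : (fun i : Fin n => if (i : ℕ) ∈ s then a i else 0) = 0 := by
    refine Matrix.eq_zero_of_forall_index_sum_mul_pow_eq_zero hv fun j => ?_
    rw [Fin.sum_univ_eq_sum_range (fun i => (if i ∈ s then a i else 0) * v j ^ i)]
    simp_rw [ite_mul, zero_mul]
    rw [sum_ite_mem, inter_eq_right.mpr hs, h j]
  intro y hy
  simpa [hy] using congrFun hb ⟨y, mem_range.mp (hs hy)⟩

/-- The node `0` is adjoined to the `v j`: it is distinct from them, and the equation at `0`
holds because all exponents are positive. -/
theorem eq_zero_of_forall_sum_mul_pow_eq_zero_of_ne_zero {n : ℕ} {v : Fin n → R}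
    (hv : Function.Injective v) (hv₀ : ∀ j, v j ≠ 0) {s : Finset ℕ} (hs : s ⊆ Icc 1 n)
    {a : ℕ → R} (h : ∀ j, ∑ y ∈ s, a y * v j ^ y = 0) : ∀ y ∈ s, a y = 0 := by
  refine eq_zero_of_forall_sum_mul_pow_eq_zero (v := Fin.cons 0 v)
    (Fin.cons_injective_iff.mpr ⟨fun ⟨j, hj⟩ => hv₀ j hj, hv⟩)
    (fun y hy => mem_range.mpr (by have := mem_Icc.mp (hs hy); omega)) (Fin.cases ?_ h)
  refine sum_eq_zero fun y hy => ?_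
  rw [Fin.cons_zero, zero_pow (by have := mem_Icc.mp (hs hy); omega), mul_zero]

end Vandermonde

theorem Finset.sum_powersetCard_ite_subset_sum_sdiff {α M : Type*} [DecidableEq α]
    [AddCommMonoid M] {U J : Finset α} (hJ : J ⊆ U) (f : Finset α → α → M) :
    ∑ A ∈ U.powersetCard (#J + 1), (if J ⊆ A then ∑ x ∈ A \ J, f A x else 0)
      = ∑ y ∈ U \ J, f (insert y J) y := by
  rw [← sum_filter]
  refine (sum_comm' (t' := U \ J) (s' := fun y => {insert y J}) fun A y => ?_).trans
    (by simp)
  simp only [mem_filter, mem_powersetCard, mem_sdiff, mem_singleton]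
  constructor
  · rintro ⟨⟨⟨hAU, hA⟩, hJA⟩, hyA, hyJ⟩
    refine ⟨(eq_of_subset_of_card_le (insert_subset hyA hJA) ?_).symm, hAU hyA, hyJ⟩
    rw [hA, card_insert_of_notMem hyJ]
  · rintro ⟨rfl, hyU, hyJ⟩
    exact ⟨⟨⟨insert_subset hyU hJ, card_insert_of_notMem hyJ⟩, subset_insert _ _⟩,
      mem_insert_self _ _, hyJ⟩

theorem Finset.card_filter_powersetCard_inter_nonempty {α : Type*} [DecidableEq α]
    (U T : Finset α) (m : ℕ) :
    #{A ∈ U.powersetCard m | (A ∩ T).Nonempty} = (#U).choose m - (#(U \ T)).choose m := by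
  have hcompl : {A ∈ U.powersetCard m | ¬(A ∩ T).Nonempty} = (U \ T).powersetCard m := by
    ext A
    simp only [mem_filter, mem_powersetCard, subset_sdiff, not_nonempty_iff_eq_empty,
      disjoint_iff_inter_eq_empty]
    tauto
  have hsplit := card_filter_add_card_filter_not (s := U.powersetCard m)
    (p := fun A => (A ∩ T).Nonempty)
  rw [hcompl, card_powersetCard, card_powersetCard] at hsplit
  omega

section RepairEncoder

variable {R : Type*} [CommRing R] {ℓ : ℕ}

def repairEncoderEntry (ψ : R) (I J : Finset ℕ) : R :=
  if J ⊆ I then ∑ x ∈ I \ J, (-1 : R) ^ #{y ∈ I | y ≤ x} * ψ ^ x else 0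

def repairEncoderRows (d m ℓ : ℕ) : Finset (Finset ℕ) :=
  {I ∈ (Icc 1 d).powersetCard m | (I ∩ Icc 1 ℓ).Nonempty}

def repairEncoderMatrix (d m : ℕ) (ψ : Fin ℓ → R) :
    Matrix (repairEncoderRows d m ℓ) (Fin ℓ × (Icc 1 d).powersetCard (m - 1)) R :=
  Matrix.of fun I c => repairEncoderEntry (ψ c.1) I c.2

theorem sum_repairEncoderEntry_mul (ψ : R) (G : Finset ℕ → R) {U J : Finset ℕ} (hJ : J ⊆ U) :
    ∑ A ∈ U.powersetCard (#J + 1), repairEncoderEntry ψ A J * G A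
      = ∑ y ∈ U \ J, (-1 : R) ^ #{z ∈ insert y J | z ≤ y} * G (insert y J) * ψ ^ y := by
  simp_rw [repairEncoderEntry, ite_mul, zero_mul, sum_mul]
  rw [sum_powersetCard_ite_subset_sum_sdiff hJ]
  exact sum_congr rfl fun y _ => by ring

variable [IsDomain R] {ψ : Fin ℓ → R}

theorem repairEncoder_insert_eq_zero_of_column {d : ℕ} (hinj : Function.Injective ψ)
    (hψ : ∀ j, ψ j ≠ 0) {J : Finset ℕ} (hJ : J ⊆ Icc 1 d) {G : Finset ℕ → R}
    (hcol : ∀ j, ∑ A ∈ (Icc 1 d).powersetCard (#J + 1), repairEncoderEntry (ψ j) A J * G A = 0)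
    (hG : ∀ y ∈ Icc 1 d \ J, ℓ < y → G (insert y J) = 0) {x : ℕ} (hx : x ∈ Icc 1 d \ J)
    (hxℓ : x ≤ ℓ) : G (insert x J) = 0 := by
  set a : ℕ → R := fun y => (-1 : R) ^ #{z ∈ insert y J | z ≤ y} * G (insert y J)
  have hs : {y ∈ Icc 1 d \ J | y ≤ ℓ} ⊆ Icc 1 ℓ := fun y hy => by
    simp only [mem_filter, mem_sdiff, mem_Icc] at hy ⊢; omega
  have hsum : ∀ j, ∑ y ∈ {y ∈ Icc 1 d \ J | y ≤ ℓ}, a y * ψ j ^ y = 0 := fun j => by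
    rw [sum_filter_of_ne fun y hy hne => ?_, ← hcol j, sum_repairEncoderEntry_mul _ _ hJ]
    by_contra! hyℓ
    exact hne (by simp [a, hG y hy hyℓ])
  have hax := eq_zero_of_forall_sum_mul_pow_eq_zero_of_ne_zero hinj hψ hs hsum x
    (mem_filter.mpr ⟨hx, hxℓ⟩)
  exact (mul_eq_zero.mp hax).resolve_left (pow_ne_zero _ (neg_ne_zero.mpr one_ne_zero))

theorem repairEncoder_eq_zero_of_forall_sum_mul_eq_zero (hinj : Function.Injective ψ)
    (hψ : ∀ j, ψ j ≠ 0) {d m : ℕ} {G : Finset ℕ → R} (hG : ∀ A, A ∩ Icc 1 ℓ = ∅ → G A = 0)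
    (hcol : ∀ j, ∀ J ∈ (Icc 1 d).powersetCard (m - 1),
      ∑ A ∈ (Icc 1 d).powersetCard m, repairEncoderEntry (ψ j) A J * G A = 0) :
    ∀ A ∈ (Icc 1 d).powersetCard m, G A = 0 := by
  intro A hA
  induction hn : #(A ∩ Icc 1 ℓ) using Nat.strong_induction_on generalizing A with
  | _ n ih =>
  obtain ⟨hAd, hAm⟩ := mem_powersetCard.mp hA
  obtain h0 | ⟨x, hx⟩ := (A ∩ Icc 1 ℓ).eq_empty_or_nonempty
  · exact hG A h0
  obtain ⟨hxA, hxℓ⟩ := mem_inter.mp hx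
  have hJd : A.erase x ⊆ Icc 1 d := (erase_subset x A).trans hAd
  have hJm : #(A.erase x) + 1 = m := by rw [card_erase_add_one hxA, hAm]
  have hJ : A.erase x ∈ (Icc 1 d).powersetCard (m - 1) :=
    mem_powersetCard.mpr ⟨hJd, by omega⟩
  rw [← insert_erase hxA]
  refine repairEncoder_insert_eq_zero_of_column hinj hψ hJd (fun j => hJm ▸ hcol j _ hJ)
    (fun y hy hyℓ => ?_) (mem_sdiff.mpr ⟨hAd hxA, notMem_erase x A⟩) (mem_Icc.mp hxℓ).2
  obtain ⟨hyd, hyJ⟩ := mem_sdiff.mp hy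
  have hinter : insert y (A.erase x) ∩ Icc 1 ℓ = (A ∩ Icc 1 ℓ).erase x := by
    rw [insert_inter_of_notMem (by rw [mem_Icc]; omega), erase_inter]
  refine ih _ ?_ _ ?_ rfl
  · rw [← hn, hinter]
    exact card_erase_lt_of_mem hx
  · exact mem_powersetCard.mpr ⟨insert_subset hyd hJd, by rw [card_insert_of_notMem hyJ, hJm]⟩

theorem linearIndependent_repairEncoderMatrix_row {d m : ℕ} (hinj : Function.Injective ψ)
    (hψ : ∀ j, ψ j ≠ 0) : LinearIndependent R (repairEncoderMatrix d m ψ).row := by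
  rw [Fintype.linearIndependent_iff]
  intro g hg I
  set G : Finset ℕ → R := fun A => if h : A ∈ repairEncoderRows d m ℓ then g ⟨A, h⟩ else 0
  have hGg : ∀ I : repairEncoderRows d m ℓ, G I = g I := fun I => dif_pos I.2
  have hG : ∀ A, A ∩ Icc 1 ℓ = ∅ → G A = 0 := fun A hA =>
    dif_neg (by simp [repairEncoderRows, hA])
  have hcol : ∀ j, ∀ J ∈ (Icc 1 d).powersetCard (m - 1),
      ∑ A ∈ (Icc 1 d).powersetCard m, repairEncoderEntry (ψ j) A J * G A = 0 := by
    intro j J hJ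
    have hgJ := congrFun hg (j, ⟨J, hJ⟩)
    rw [← sum_filter_of_ne (p := fun A => (A ∩ Icc 1 ℓ).Nonempty) fun A _ hA =>
      nonempty_iff_ne_empty.mpr fun h => hA (by rw [hG A h, mul_zero])]
    change ∑ A ∈ repairEncoderRows d m ℓ, _ = 0
    rw [← sum_coe_sort]
    simpa [repairEncoderMatrix, hGg, mul_comm] using hgJ
  simpa [hGg] using repairEncoder_eq_zero_of_forall_sum_mul_eq_zero hinj hψ hG hcol I
    (mem_filter.mp I.2).1

end RepairEncoder

theorem repair_encoder_full_rank_general (F : Type*) [Field F] (d m ℓ : ℕ)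
    (ψ : Fin ℓ → F) (hinj : Function.Injective ψ) (hψ : ∀ j, ψ j ≠ 0) :
    (Matrix.of fun
        (I : {I // I ∈ ((Finset.Icc 1 d).powersetCard m).filter
              (fun I => (I ∩ Finset.Icc 1 ℓ).Nonempty)})
        (c : Fin ℓ × {J // J ∈ (Finset.Icc 1 d).powersetCard (m - 1)}) =>
        if c.2.1 ⊆ I.1 then
          ∑ x ∈ I.1 \ c.2.1,
            (-1 : F) ^ ((I.1.filter (· ≤ x)).card) * (ψ c.1) ^ x
        else 0).rank
      = Nat.choose d m - Nat.choose (d - ℓ) m := by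
  have hrank := (linearIndependent_repairEncoderMatrix_row (d := d) (m := m) hinj hψ).rank_matrix
  have hcompl : Icc 1 d \ Icc 1 ℓ = Ioc ℓ d := by
    ext y
    simp only [mem_sdiff, mem_Icc, mem_Ioc]
    omega
  refine hrank.trans ?_
  rw [Fintype.card_coe, repairEncoderRows, card_filter_powersetCard_inter_nonempty, hcompl,
    Nat.card_Icc, Nat.card_Ioc, Nat.add_sub_cancel]

/-- Full-rankness of the eavesdropped repair encoder matrix `⌈Ξ⌉^ℒ`: its rows
are indexed by the `m`-subsets `I ⊆ [d]` with `I ∩ [ℓ] ≠ ∅`, its columns by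
pairs `(j, 𝒥)` with `j ∈ [ℓ]` and `𝒥` an `(m−1)`-subset of `[d]`, its entry at
`(I, (j, 𝒥))` being `(−1)^{ind_I(x)}·ψⱼ^x` if `I = 𝒥 ∪ {x}` and `0` otherwise.
Its rank equals `C(d,m) − C(d−ℓ,m)`, the number of its rows. -/
theorem repair_encoder_full_rank (F : Type*) [Field F] (d m ℓ : ℕ)
    (hm : 1 ≤ m) (hmd : m ≤ d) (hℓ : 1 ≤ ℓ) (hℓd : ℓ ≤ d)
    (ψ : Fin ℓ → F) (hinj : Function.Injective ψ) (hψ : ∀ j, ψ j ≠ 0) :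
    (Matrix.of fun
        (I : {I // I ∈ ((Finset.Icc 1 d).powersetCard m).filter
              (fun I => (I ∩ Finset.Icc 1 ℓ).Nonempty)})
        (c : Fin ℓ × {J // J ∈ (Finset.Icc 1 d).powersetCard (m - 1)}) =>
        if c.2.1 ⊆ I.1 then
          ∑ x ∈ I.1 \ c.2.1,
            (-1 : F) ^ ((I.1.filter (· ≤ x)).card) * (ψ c.1) ^ x
        else 0).rank
      = Nat.choose d m - Nat.choose (d - ℓ) m :=
  repair_encoder_full_rank_general F d m ℓ ψ hinj hψ
end
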